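/- arXiv:0802.1058 — 5 statements merged into one kernel-verified Lean document; each statement's English description precedes it below -/
import Mathlib

section
/- Let F be a field, d, e ≥ 0, and let M = F[ω]/(ω^{d+1}) and N = F[ω']/(ω'^{e+1}) be truncated polynomial rings. Give M ⊗_F N the structure of an F[t]-module where t acts as ω ⊗ 1 + 1 ⊗ ω'. If F has characteristic zero, then for every 0 ≤ i ≤ ⌊(d+e)/2⌋ the multiplication map t^{d+e-2i} : (M ⊗ N)_i → (M ⊗ N)_{d+e-i} between graded components is an isomorphism of F-vector spaces. -/
open scoped TensorProduct
set_option synthInstance.maxHeartbeats 1000000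
set_option maxHeartbeats 1000000

/-- The truncated polynomial ring `F[ω]/(ω^{d+1})`. -/
abbrev TruncPR (F : Type*) [Field F] (d : ℕ) :=
  Polynomial F ⧸ Ideal.span {(Polynomial.X : Polynomial F) ^ (d + 1)}

/-- The image of `ω` in `F[ω]/(ω^{d+1})`. -/
noncomputable def truncX (F : Type*) [Field F] (d : ℕ) : TruncPR F d :=
  Ideal.Quotient.mk _ Polynomial.X

/-- The degree-`k` graded component of `F[ω]/(ω^{d+1}) ⊗_F F[ω']/(ω'^{e+1})`,
spanned by `{ω^a ⊗ ω'^b : a + b = k, 0 ≤ a ≤ d, 0 ≤ b ≤ e}`. -/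
noncomputable def gradedPiece (F : Type*) [Field F] (d e k : ℕ) :
    Submodule F (TruncPR F d ⊗[F] TruncPR F e) :=
  Submodule.span F
    {x | ∃ a b : ℕ, a ≤ d ∧ b ≤ e ∧ a + b = k ∧ x = ((truncX F d) ^ a) ⊗ₜ[F] ((truncX F e) ^ b)}

/-!
`F[ω]/(ω^{d+1})` is the irreducible `sl₂`-representation of dimension `d + 1`: multiplication
by `ω` raises degree, `ω^a ↦ a (d + 1 - a) ω^{a-1}` lowers it, and their commutator acts on `ω^a`
by `2a - d`. On the tensor product, `t = ω ⊗ 1 + 1 ⊗ ω'` and the sum `f` of the two lowering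
operators therefore satisfy `[t, f] = 2k - D` on the degree-`k` piece, where `D = d + e`. The
classical `sl₂` argument shows, in characteristic zero, that `t^{D-2k}` is injective on degree
`k`; the symmetry `k ↦ D - k`, which swaps `t` and `f`, makes `f^{D-2k}` injective from degree
`D - k` back to degree `k`. Hence the two pieces have equal dimension and `t^{D-2k}` is bijective.
-/

open Module

section FiniteDimensional

variable {K V W : Type*} [Field K] [AddCommGroup V] [Module K V] [AddCommGroup W] [Module K W]
  {g : V →ₗ[K] W} {p : Submodule K V} {q : Submodule K W}

theorem LinearMap.finrank_le_of_mapsTo_of_injOn [FiniteDimensional K q]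
    (hmaps : Set.MapsTo g p q) (hinj : Set.InjOn g p) : finrank K p ≤ finrank K q :=
  LinearMap.finrank_le_finrank_of_injective (f := g.restrict hmaps)
    ((LinearMap.injective_restrict_iff hmaps).mpr (LinearMap.disjoint_ker_iff_injOn.mpr hinj))

theorem LinearMap.bijOn_of_injOn_of_finrank_le [FiniteDimensional K p] [FiniteDimensional K q]
    (hmaps : Set.MapsTo g p q) (hinj : Set.InjOn g p) (hdim : finrank K q ≤ finrank K p) :
    Set.BijOn g p q := by
  refine ⟨hmaps, hinj, ?_⟩
  rw [← hmaps.restrict_surjective_iff]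
  change Function.Surjective (g.restrict hmaps)
  refine (LinearMap.injective_iff_surjective_of_finrank_eq_finrank
    (le_antisymm (finrank_le_of_mapsTo_of_injOn hmaps hinj) hdim)).mp ?_
  exact (LinearMap.injective_restrict_iff hmaps).mpr (LinearMap.disjoint_ker_iff_injOn.mpr hinj)

end FiniteDimensional

structure IsSl2Grading {K V : Type*} [Field K] [AddCommGroup V] [Module K V]
    (P : ℕ → Submodule K V) (D : ℕ) (e f : Module.End K V) : Prop where
  raise : ∀ k < D, ∀ v ∈ P k, e v ∈ P (k + 1)
  lower : ∀ k < D, ∀ v ∈ P (k + 1), f v ∈ P k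
  lower_zero : ∀ v ∈ P 0, f v = 0
  raise_top : ∀ v ∈ P D, e v = 0
  lie : ∀ k ≤ D, ∀ v ∈ P k, e (f v) - f (e v) = ((2 * k : K) - D) • v

namespace IsSl2Grading

variable {K V : Type*} [Field K] [AddCommGroup V] [Module K V]
  {P : ℕ → Submodule K V} {D : ℕ} {e f : Module.End K V}

theorem symm (h : IsSl2Grading P D e f) : IsSl2Grading (fun k ↦ P (D - k)) D f e where
  raise k hk v hv :=
    h.lower (D - (k + 1)) (by omega) v (by rwa [show D - (k + 1) + 1 = D - k by omega])
  lower k hk v hv := by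
    simpa only [show D - (k + 1) + 1 = D - k by omega] using h.raise (D - (k + 1)) (by omega) v hv
  lower_zero v hv := h.raise_top v hv
  raise_top v hv := h.lower_zero v (by simpa using hv)
  lie k hk v hv := by
    rw [← neg_sub, h.lie (D - k) (by omega) v hv, Nat.cast_sub hk, ← neg_smul]
    congr 1
    ring

theorem pow_mem (h : IsSl2Grading P D e f) {k m : ℕ} (hkm : k + m ≤ D) {v : V} (hv : v ∈ P k) :
    (e ^ m) v ∈ P (k + m) := by
  induction m with
  | zero => simpa using hv
  | succ m ih =>
    rw [pow_succ', Module.End.mul_apply, ← add_assoc]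
    exact h.raise _ (by omega) _ (ih (by omega))

theorem lower_raise_pow_succ (h : IsSl2Grading P D e f) {k m : ℕ} (hkm : k + m ≤ D) {v : V}
    (hv : v ∈ P k) :
    f ((e ^ (m + 1)) v) = (e ^ (m + 1)) (f v) + (((m : K) + 1) * (D - 2 * k - m)) • (e ^ m) v := by
  induction m with
  | zero =>
    have hlie := h.lie k (by omega) v hv
    simp only [zero_add, pow_one, pow_zero, Module.End.one_apply, Nat.cast_zero]
    rw [← sub_eq_iff_eq_add', ← neg_sub, hlie]
    module
  | succ m ih =>
    have hlie := h.lie (k + (m + 1)) (by omega) _ (h.pow_mem (by omega) hv)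
    have hfe : f (e ((e ^ (m + 1)) v)) = e (f ((e ^ (m + 1)) v))
        - ((2 * (k + (m + 1) : ℕ) : K) - D) • (e ^ (m + 1)) v := by
      rw [← hlie, sub_sub_cancel]
    rw [pow_succ' e (m + 1), Module.End.mul_apply, hfe, ih (by omega), map_add, map_smul,
      ← Module.End.mul_apply, ← pow_succ', pow_succ' e m, Module.End.mul_apply]
    push_cast
    module

theorem mapsTo_pow (h : IsSl2Grading P D e f) {k : ℕ} (hk : 2 * k ≤ D) :
    Set.MapsTo (e ^ (D - 2 * k)) (P k) (P (D - k)) := fun _ hv ↦ by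
  have := h.pow_mem (m := D - 2 * k) (by omega) hv
  rwa [show k + (D - 2 * k) = D - k by omega] at this

variable [CharZero K]

theorem eq_zero_of_raise_pow_eq_zero_of_lower_eq_zero (h : IsSl2Grading P D e f) {k m : ℕ}
    (hm : 2 * k + m ≤ D) {v : V} (hv : v ∈ P k) (hfv : f v = 0) (hzero : (e ^ m) v = 0) :
    v = 0 := by
  induction m with
  | zero => simpa using hzero
  | succ m ih =>
    refine ih (by omega) ?_
    have hcoeff : ((m : K) + 1) * (D - 2 * k - m) ≠ 0 := by
      have : (D : K) ≠ 2 * k + m := by exact_mod_cast (by omega : D ≠ 2 * k + m)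
      exact mul_ne_zero (Nat.cast_add_one_ne_zero m) (by rwa [sub_sub, sub_ne_zero])
    have := h.lower_raise_pow_succ (m := m) (by omega) hv
    rw [hzero, hfv, map_zero, map_zero, zero_add, eq_comm, smul_eq_zero] at this
    exact this.resolve_left hcoeff

theorem eq_zero_of_raise_pow_eq_zero (h : IsSl2Grading P D e f) {k : ℕ} (hk : 2 * k ≤ D) {v : V}
    (hv : v ∈ P k) (hzero : (e ^ (D - 2 * k)) v = 0) : v = 0 := by
  induction k generalizing v with
  | zero =>
    exact h.eq_zero_of_raise_pow_eq_zero_of_lower_eq_zero (by omega) hv (h.lower_zero v hv) hzero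
  | succ k ih =>
    -- `f v = 0` by induction: commuting `f` past `e ^ (D - 2 * k)` leaves only powers of `e`
    -- that already kill `v`.
    refine h.eq_zero_of_raise_pow_eq_zero_of_lower_eq_zero (by omega) hv ?_ hzero
    have hvanish : ∀ j ≥ D - 2 * (k + 1), (e ^ j) v = 0 := fun j hj ↦ by
      rw [← Nat.sub_add_cancel hj, pow_add, Module.End.mul_apply, hzero, map_zero]
    apply ih (by omega) (h.lower k (by omega) v hv)
    have := h.lower_raise_pow_succ (m := D - 2 * (k + 1) + 1) (by omega) hv
    rwa [hvanish _ (by omega), hvanish _ (by omega), map_zero, smul_zero, add_zero, eq_comm,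
      show D - 2 * (k + 1) + 1 + 1 = D - 2 * k by omega] at this

theorem injOn_pow (h : IsSl2Grading P D e f) {k : ℕ} (hk : 2 * k ≤ D) :
    Set.InjOn (e ^ (D - 2 * k)) (P k) :=
  LinearMap.disjoint_ker_iff_injOn.mp <| Submodule.disjoint_def.mpr fun _ hv hker ↦
    h.eq_zero_of_raise_pow_eq_zero hk hv hker

theorem bijOn_pow [FiniteDimensional K V] (h : IsSl2Grading P D e f) {k : ℕ} (hk : 2 * k ≤ D) :
    Set.BijOn (e ^ (D - 2 * k)) (P k) (P (D - k)) := by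
  have hmaps := h.symm.mapsTo_pow hk
  have hinj := h.symm.injOn_pow hk
  simp only [Nat.sub_sub_self (by omega : k ≤ D)] at hmaps hinj
  exact LinearMap.bijOn_of_injOn_of_finrank_le (h.mapsTo_pow hk) (h.injOn_pow hk)
    (LinearMap.finrank_le_of_mapsTo_of_injOn hmaps hinj)

end IsSl2Grading

section TruncPR

variable (F : Type*) [Field F] (d : ℕ)

theorem truncX_pow_succ : truncX F d ^ (d + 1) = 0 := by
  rw [truncX, ← map_pow, Ideal.Quotient.eq_zero_iff_mem]
  exact Ideal.subset_span rfl

noncomputable def truncBasis : Basis (Fin (d + 1)) F (TruncPR F d) :=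
  (AdjoinRoot.powerBasis' (Polynomial.monic_X_pow (d + 1) (R := F))).basis.reindex
    (finCongr (by simp))

theorem truncBasis_apply (a : Fin (d + 1)) : truncBasis F d a = truncX F d ^ (a : ℕ) := by
  rw [truncBasis]
  -- `TruncPR F d` is `AdjoinRoot (X ^ (d + 1))` only up to unfolding.
  erw [Basis.reindex_apply, PowerBasis.basis_eq_pow]
  rfl

instance : FiniteDimensional F (TruncPR F d) := .of_basis (truncBasis F d)

noncomputable def truncLower : Module.End F (TruncPR F d) :=
  (truncBasis F d).constr F fun a ↦ ((a : F) * (d + 1 - a)) • truncX F d ^ ((a : ℕ) - 1)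

theorem truncLower_truncX_pow {a : ℕ} (ha : a ≤ d + 1) :
    truncLower F d (truncX F d ^ a) = ((a : F) * (d + 1 - a)) • truncX F d ^ (a - 1) := by
  rcases ha.lt_or_eq with ha | rfl
  · rw [← truncBasis_apply F d ⟨a, ha⟩, truncLower, Basis.constr_basis]
  · rw [truncX_pow_succ, map_zero]
    push_cast
    simp

variable {F d}

theorem truncX_mul_truncLower_sub {a : ℕ} (ha : a ≤ d) :
    truncX F d * truncLower F d (truncX F d ^ a) - truncLower F d (truncX F d * truncX F d ^ a)
      = ((2 * a : F) - d) • truncX F d ^ a := by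
  rw [← pow_succ', truncLower_truncX_pow F d (by omega), truncLower_truncX_pow F d (by omega),
    mul_smul_comm, ← pow_succ', Nat.add_sub_cancel]
  rcases a with _ | a
  · simp
  · rw [Nat.add_sub_cancel]
    push_cast
    module

end TruncPR

section TensorProduct

open TensorProduct

variable (F : Type*) [Field F] (d e : ℕ)

noncomputable def tensorRaise : Module.End F (TruncPR F d ⊗[F] TruncPR F e) :=
  LinearMap.mulLeft F (truncX F d ⊗ₜ[F] (1 : TruncPR F e) + (1 : TruncPR F d) ⊗ₜ[F] truncX F e)

noncomputable def tensorLower : Module.End F (TruncPR F d ⊗[F] TruncPR F e) :=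
  map (truncLower F d) LinearMap.id + map LinearMap.id (truncLower F e)

variable {F d e}

theorem tensorRaise_tmul (x : TruncPR F d) (y : TruncPR F e) :
    tensorRaise F d e (x ⊗ₜ y) = (truncX F d * x) ⊗ₜ y + x ⊗ₜ (truncX F e * y) := by
  simp [tensorRaise, add_mul]

theorem tensorLower_tmul (x : TruncPR F d) (y : TruncPR F e) :
    tensorLower F d e (x ⊗ₜ y) = truncLower F d x ⊗ₜ y + x ⊗ₜ truncLower F e y := by
  simp [tensorLower]

theorem tensorRaise_tensorLower_sub_tmul (x : TruncPR F d) (y : TruncPR F e) :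
    tensorRaise F d e (tensorLower F d e (x ⊗ₜ y)) - tensorLower F d e (tensorRaise F d e (x ⊗ₜ y))
      = (truncX F d * truncLower F d x - truncLower F d (truncX F d * x)) ⊗ₜ y
        + x ⊗ₜ (truncX F e * truncLower F e y - truncLower F e (truncX F e * y)) := by
  simp only [tensorLower_tmul, tensorRaise_tmul, map_add, sub_tmul, tmul_sub]
  abel

theorem truncX_pow_tmul_mem_gradedPiece {a b k : ℕ} (hab : a + b = k) :
    (truncX F d ^ a) ⊗ₜ[F] (truncX F e ^ b) ∈ gradedPiece F d e k := by
  by_cases ha : a ≤ d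
  · by_cases hb : b ≤ e
    · exact Submodule.subset_span ⟨a, b, ha, hb, hab, rfl⟩
    · rw [pow_eq_zero_of_le (by omega) (truncX_pow_succ F e), tmul_zero]
      exact zero_mem _
  · rw [pow_eq_zero_of_le (by omega) (truncX_pow_succ F d), zero_tmul]
    exact zero_mem _

theorem gradedPiece_le {k : ℕ} {q : Submodule F (TruncPR F d ⊗[F] TruncPR F e)}
    (h : ∀ a b : ℕ, a ≤ d → b ≤ e → a + b = k → (truncX F d ^ a) ⊗ₜ[F] (truncX F e ^ b) ∈ q) :
    gradedPiece F d e k ≤ q := by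
  rw [gradedPiece, Submodule.span_le]
  rintro _ ⟨a, b, ha, hb, hab, rfl⟩
  exact h a b ha hb hab

theorem tensorRaise_mem_gradedPiece {k : ℕ} {v : TruncPR F d ⊗[F] TruncPR F e}
    (hv : v ∈ gradedPiece F d e k) : tensorRaise F d e v ∈ gradedPiece F d e (k + 1) := by
  suffices h : gradedPiece F d e k ≤ (gradedPiece F d e (k + 1)).comap (tensorRaise F d e) from
    h hv
  refine gradedPiece_le fun a b _ _ hab ↦ ?_
  rw [Submodule.mem_comap, tensorRaise_tmul, ← pow_succ', ← pow_succ']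
  exact add_mem (truncX_pow_tmul_mem_gradedPiece (by omega))
    (truncX_pow_tmul_mem_gradedPiece (by omega))

theorem tensorLower_mem_gradedPiece {k : ℕ} {v : TruncPR F d ⊗[F] TruncPR F e}
    (hv : v ∈ gradedPiece F d e (k + 1)) : tensorLower F d e v ∈ gradedPiece F d e k := by
  suffices h : gradedPiece F d e (k + 1) ≤ (gradedPiece F d e k).comap (tensorLower F d e) from
    h hv
  refine gradedPiece_le fun a b ha hb hab ↦ ?_
  rw [Submodule.mem_comap, tensorLower_tmul, truncLower_truncX_pow F d (by omega),
    truncLower_truncX_pow F e (by omega), ← smul_tmul', tmul_smul]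
  refine add_mem ?_ ?_
  · rcases a with _ | a
    · simp
    · exact Submodule.smul_mem _ _ (truncX_pow_tmul_mem_gradedPiece (by omega))
  · rcases b with _ | b
    · simp
    · exact Submodule.smul_mem _ _ (truncX_pow_tmul_mem_gradedPiece (by omega))

theorem gradedPiece_zero_le_ker_tensorLower :
    gradedPiece F d e 0 ≤ LinearMap.ker (tensorLower F d e) :=
  gradedPiece_le fun a b _ _ hab ↦ by
    obtain ⟨rfl, rfl⟩ : a = 0 ∧ b = 0 := by omega
    rw [LinearMap.mem_ker, tensorLower_tmul, truncLower_truncX_pow F d (by omega),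
      truncLower_truncX_pow F e (by omega)]
    simp

theorem gradedPiece_top_le_ker_tensorRaise :
    gradedPiece F d e (d + e) ≤ LinearMap.ker (tensorRaise F d e) :=
  gradedPiece_le fun a b _ _ hab ↦ by
    obtain ⟨rfl, rfl⟩ : a = d ∧ b = e := by omega
    rw [LinearMap.mem_ker, tensorRaise_tmul, ← pow_succ', ← pow_succ', truncX_pow_succ,
      truncX_pow_succ, zero_tmul, tmul_zero, add_zero]

theorem tensorRaise_tensorLower_sub {k : ℕ} {v : TruncPR F d ⊗[F] TruncPR F e}
    (hv : v ∈ gradedPiece F d e k) :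
    tensorRaise F d e (tensorLower F d e v) - tensorLower F d e (tensorRaise F d e v)
      = ((2 * k : F) - (d + e : ℕ)) • v := by
  suffices h : gradedPiece F d e k ≤ LinearMap.ker
      (tensorRaise F d e * tensorLower F d e - tensorLower F d e * tensorRaise F d e
        - ((2 * k : F) - (d + e : ℕ)) • 1) by
    simpa [sub_eq_zero] using h hv
  refine gradedPiece_le fun a b ha hb hab ↦ ?_
  rw [LinearMap.mem_ker, LinearMap.sub_apply, sub_eq_zero, LinearMap.sub_apply,
    Module.End.mul_apply, Module.End.mul_apply, tensorRaise_tensorLower_sub_tmul,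
    truncX_mul_truncLower_sub ha, truncX_mul_truncLower_sub hb, ← smul_tmul', tmul_smul,
    ← add_smul, LinearMap.smul_apply, Module.End.one_apply, ← hab]
  congr 1
  push_cast
  ring

theorem isSl2Grading_gradedPiece :
    IsSl2Grading (gradedPiece F d e) (d + e) (tensorRaise F d e) (tensorLower F d e) where
  raise _ _ _ := tensorRaise_mem_gradedPiece
  lower _ _ _ := tensorLower_mem_gradedPiece
  lower_zero _ hv := gradedPiece_zero_le_ker_tensorLower hv
  raise_top _ hv := gradedPiece_top_le_ker_tensorRaise hv
  lie _ _ _ := tensorRaise_tensorLower_sub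

end TensorProduct

/-- in characteristic zero, multiplication by
`t^{d+e-2i}`, where `t = ω ⊗ 1 + 1 ⊗ ω'`, is an isomorphism of `F`-vector
spaces from the degree-`i` graded component of `M ⊗ N` onto the
degree-`(d+e-i)` graded component, for every `0 ≤ i ≤ ⌊(d+e)/2⌋`. -/
theorem trunc_tensor_strong_lefschetz
    (F : Type*) [Field F] [CharZero F] (d e : ℕ) :
    ∀ i ≤ (d + e) / 2,
      Set.BijOn
        (⇑((LinearMap.mulLeft F
            ((truncX F d) ⊗ₜ[F] (1 : TruncPR F e) + (1 : TruncPR F d) ⊗ₜ[F] (truncX F e))) ^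
              (d + e - 2 * i)))
        (gradedPiece F d e i) (gradedPiece F d e (d + e - i)) :=
  fun _ hi ↦ isSl2Grading_gradedPiece.bijOn_pow (by omega)
end

section
/- Let F be a field of characteristic zero. For integers d, e ≥ 0 and 0 ≤ i ≤ ⌊(d+e)/2⌋, consider the matrix whose (j, k) entry is binomial(d+e-2i, a'-a), interpreted as 0 if a' < a or a'-a > d+e-2i. Here j indexes the pairs (a,b) with a+b = i, and k indexes the pairs (a',b') with a'+b' = d+e-i, where 0 ≤ a, a' ≤ d and 0 ≤ b, b' ≤ e. This matrix is a square matrix with nonzero determinant. -/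
open Polynomial

lemma fewnomial_mult {F : Type*} [Field F] [CharZero F] :
    ∀ t (Q : F[X]), Q.support.card = t → Q ≠ 0 → ∀ α : F, α ≠ 0 →
      Q.rootMultiplicity α < t := by
  intro t
  induction t using Nat.strong_induction_on with
  | _ t IH =>
    intro Q ht hQ α hα
    have hcard : 0 < t := ht ▸ Finset.card_pos.mpr (Polynomial.nonempty_support_iff.mpr hQ)
    rcases Nat.eq_zero_or_pos (Q.rootMultiplicity α) with hm | hm
    · omega
    have hroot : Q.IsRoot α := (Polynomial.rootMultiplicity_pos hQ).mp hm
    have ht2 : 2 ≤ t := by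
      by_contra h
      have h1 : Q.support.card = 1 := by omega
      obtain ⟨u, a, ha, rfl⟩ := Polynomial.card_support_eq_one.mp h1
      have : a * α ^ u = 0 := by simpa [Polynomial.IsRoot] using hroot
      exact (mul_ne_zero ha (pow_ne_zero u hα)) this
    set k := Q.natTrailingDegree with hk
    set R := X * Polynomial.derivative Q - C (k : F) * Q with hRdef
    have hcoeffR : ∀ m : ℕ, R.coeff m = ((m : F) - (k : F)) * Q.coeff m := by
      intro m
      cases m with
      | zero =>
        simp [hRdef, Polynomial.mul_coeff_zero]
      | succ m =>
        rw [hRdef, Polynomial.coeff_sub, Polynomial.coeff_X_mul,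
          Polynomial.coeff_derivative, Polynomial.coeff_C_mul]
        push_cast
        ring
    have hsubset : R.support ⊆ Q.support.erase k := by
      intro m hmm
      rw [Polynomial.mem_support_iff, hcoeffR] at hmm
      rw [Finset.mem_erase, Polynomial.mem_support_iff]
      constructor
      · intro hmk
        apply hmm
        rw [hmk]
        simp
      · intro h
        apply hmm
        rw [h, mul_zero]
    have hkmem : k ∈ Q.support := Polynomial.natTrailingDegree_mem_support_of_nonzero hQ
    have hDmem : Q.natDegree ∈ Q.support := Polynomial.natDegree_mem_support_of_nonzero hQ
    have hDk : Q.natDegree ≠ k := by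
      intro h
      have hsub1 : Q.support ⊆ {k} := by
        intro m hmem
        rw [Finset.mem_singleton]
        have h1 : m ≤ Q.natDegree := Polynomial.le_natDegree_of_mem_supp m hmem
        have h2 : k ≤ m :=
          Polynomial.natTrailingDegree_le_of_ne_zero (Polynomial.mem_support_iff.mp hmem)
        omega
      have := Finset.card_le_card hsub1
      rw [Finset.card_singleton] at this
      omega
    have hRne : R ≠ 0 := by
      intro h
      have h1 : R.coeff Q.natDegree ≠ 0 := by
        rw [hcoeffR]
        refine mul_ne_zero (sub_ne_zero.mpr ?_) (Polynomial.mem_support_iff.mp hDmem)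
        exact_mod_cast hDk
      rw [h] at h1
      simp at h1
    obtain ⟨S, hS⟩ := Polynomial.pow_rootMultiplicity_dvd Q α
    obtain ⟨m', hm'⟩ : ∃ m', Q.rootMultiplicity α = m' + 1 :=
      ⟨Q.rootMultiplicity α - 1, by omega⟩
    have hdvd : (X - C α) ^ m' ∣ R := by
      refine ⟨C ((m' + 1 : ℕ) : F) * (X * S)
        + (X - C α) * (X * Polynomial.derivative S - C (k : F) * S), ?_⟩
      rw [hRdef, hS, hm', Polynomial.derivative_mul, Polynomial.derivative_pow,
        Polynomial.derivative_X_sub_C, Nat.add_sub_cancel]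
      ring
    have hmultR : m' ≤ R.rootMultiplicity α := (Polynomial.le_rootMultiplicity_iff hRne).mpr hdvd
    have hcardR : R.support.card < t := by
      have h1 := Finset.card_le_card hsubset
      rw [Finset.card_erase_of_mem hkmem, ht] at h1
      omega
    have := IH R.support.card hcardR R rfl hRne α hα
    omega



/-- Index type for the monomial basis `{x^a y^b : a + b = i, a ≤ d, b ≤ e}` of the
degree-`i` component of `F[x,y]/(x^{d+1}, y^{e+1})`. -/
abbrev MonIdx (d e i : ℕ) := {p : Fin (d + 1) × Fin (e + 1) // p.1.1 + p.2.1 = i}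

lemma monEquiv (d e i : ℕ) (h : i ≤ d + e) :
    Nonempty (MonIdx d e i ≃ MonIdx d e (d + e - i)) := by
  refine ⟨Equiv.mk
    (fun p => ⟨(⟨d - p.1.1.1, by omega⟩, ⟨e - p.1.2.1, by omega⟩), by
      have h1 := p.2; have h2 := p.1.1.isLt; have h3 := p.1.2.isLt
      dsimp only; omega⟩)
    (fun p => ⟨(⟨d - p.1.1.1, by omega⟩, ⟨e - p.1.2.1, by omega⟩), by
      have h1 := p.2; have h2 := p.1.1.isLt; have h3 := p.1.2.isLt
      dsimp only; omega⟩)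
    ?_ ?_⟩
  · intro p
    have h2 := p.1.1.isLt; have h3 := p.1.2.isLt
    apply Subtype.ext
    apply Prod.ext <;> apply Fin.ext <;> dsimp only <;> omega
  · intro p
    have h2 := p.1.1.isLt; have h3 := p.1.2.isLt
    apply Subtype.ext
    apply Prod.ext <;> apply Fin.ext <;> dsimp only <;> omega

/-- over a field of characteristic zero, the matrix of
multiplication by `(x+y)^{d+e-2i}` from degree `i` to degree `d+e-i` of
`F[x,y]/(x^{d+1}, y^{e+1})`, whose entry at `((a,b),(a',b'))` is
`binomial(d+e-2i, a'-a)` (and `0` when `a' < a`), is square (the two index sets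
are in bijection) and has nonzero determinant. -/
theorem lefschetz_matrix_det_ne_zero
    (F : Type*) [Field F] [CharZero F] (d e i : ℕ) (hi : i ≤ (d + e) / 2) :
    Nonempty (MonIdx d e i ≃ MonIdx d e (d + e - i)) ∧
    ∀ σ : MonIdx d e i ≃ MonIdx d e (d + e - i),
      (Matrix.of fun j k : MonIdx d e i =>
        if j.1.1.1 ≤ (σ k).1.1.1 then
          (((d + e - 2 * i).choose ((σ k).1.1.1 - j.1.1.1) : F)) else 0).det ≠ 0 := by
  have h2i : 2 * i ≤ d + e := by omega
  refine ⟨monEquiv d e i (by omega), ?_⟩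
  intro σ hdet
  obtain ⟨v, hv0, hv⟩ := Matrix.exists_mulVec_eq_zero_iff.mpr hdet
  set n := d + e - 2 * i with hn
  set T := min d (d + e - i) with hT
  set A : MonIdx d e i → ℕ := fun k => (σ k).1.1.1 with hA
  have hAfact : ∀ k : MonIdx d e i, A k ≤ T ∧ d - i ≤ A k := by
    intro k
    have h1 := (σ k).2
    have h2 := (σ k).1.1.isLt
    have h3 := (σ k).1.2.isLt
    constructor <;> (simp only [hA]; omega)
  -- the polynomial
  set P : F[X] := ∑ k : MonIdx d e i, C (v k) * X ^ (T - A k) with hP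
  set G : F[X] := (X + 1) ^ n * P with hG
  have hGcoeff : ∀ m : ℕ, G.coeff m =
      ∑ k : MonIdx d e i, v k * (if T - A k ≤ m then ((n.choose (m - (T - A k))) : F) else 0) := by
    intro m
    rw [hG, hP, Finset.mul_sum, Polynomial.finset_sum_coeff]
    refine Finset.sum_congr rfl fun k _ => ?_
    rw [mul_left_comm, Polynomial.coeff_C_mul, Polynomial.coeff_mul_X_pow']
    split_ifs with h
    · rw [Polynomial.coeff_X_add_one_pow]
    · rfl
  -- window vanishing
  have hwin : ∀ a : ℕ, i - e ≤ a → a ≤ min d i → G.coeff (T - a) = 0 := by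
    intro a ha1 ha2
    set j : MonIdx d e i := ⟨(⟨a, by omega⟩, ⟨i - a, by omega⟩), by dsimp only; omega⟩ with hj
    have hvj : ∑ k : MonIdx d e i,
        (if a ≤ A k then ((n.choose (A k - a)) : F) else 0) * v k = 0 := by
      have h0 := congrFun hv j
      simp only [Matrix.mulVec, dotProduct, Matrix.of_apply, Pi.zero_apply] at h0
      exact h0
    rw [hGcoeff]
    refine Eq.trans ?_ hvj
    refine Finset.sum_congr rfl fun k _ => ?_
    have hk1 := (hAfact k).1
    rw [mul_comm]
    congr 1
    by_cases hc : a ≤ A k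
    · rw [if_pos (by omega), if_pos hc, show T - a - (T - A k) = A k - a by omega]
    · rw [if_neg (by omega), if_neg hc]
  -- high vanishing
  have hhigh : ∀ m : ℕ, T - (d - i) + n < m → G.coeff m = 0 := by
    intro m hm
    rw [hGcoeff]
    refine Finset.sum_eq_zero fun k _ => ?_
    have hk1 := (hAfact k).1
    have hk2 := (hAfact k).2
    split_ifs with h
    · rw [Nat.choose_eq_zero_of_lt (by omega), Nat.cast_zero, mul_zero]
    · rw [mul_zero]
  -- support bound
  have hiT : i - e ≤ T := by omega
  have hsupp : G.support ⊆
      Finset.range (T - min d i) ∪ Finset.Icc (T - (i - e) + 1) (T - (d - i) + n) := by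
    intro m hm
    rw [Polynomial.mem_support_iff] at hm
    rw [Finset.mem_union, Finset.mem_range, Finset.mem_Icc]
    by_contra hcon
    push_neg at hcon
    obtain ⟨h1, h2⟩ := hcon
    apply hm
    rcases le_or_gt m (T - (i - e)) with hle | hgt
    · have hmT : m ≤ T := by omega
      have := hwin (T - m) (by omega) (by omega)
      rwa [show T - (T - m) = m by omega] at this
    · exact hhigh m (by specialize h2 (by omega); omega)
  have hcard : G.support.card ≤ n := by
    have hc1 := Finset.card_le_card hsupp
    have hc2 := Finset.card_union_le (Finset.range (T - min d i))
      (Finset.Icc (T - (i - e) + 1) (T - (d - i) + n))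
    rw [Finset.card_range, Nat.card_Icc] at hc2
    omega
  -- P ≠ 0
  obtain ⟨k₀, hk₀⟩ := Function.ne_iff.mp hv0
  have hPne : P ≠ 0 := by
    intro h0
    have hc : P.coeff (T - A k₀) = v k₀ := by
      rw [hP, Polynomial.finset_sum_coeff]
      rw [Finset.sum_eq_single k₀]
      · rw [Polynomial.coeff_C_mul, Polynomial.coeff_X_pow, if_pos rfl, mul_one]
      · intro k _ hne
        rw [Polynomial.coeff_C_mul, Polynomial.coeff_X_pow, if_neg, mul_zero]
        intro heq
        apply hne
        have hk1 := (hAfact k).1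
        have hk01 := (hAfact k₀).1
        have hAeq : A k = A k₀ := by omega
        apply σ.injective
        apply Subtype.ext
        have hb := (σ k).2
        have hb0 := (σ k₀).2
        apply Prod.ext <;> apply Fin.ext
        · exact hAeq
        · simp only [hA] at hAeq; omega
      · intro h; exact absurd (Finset.mem_univ k₀) h
    rw [h0, Polynomial.coeff_zero] at hc
    exact hk₀ hc.symm
  have hX1 : (X + 1 : F[X]) ≠ 0 := by
    simpa using (Polynomial.monic_X_add_C (1 : F)).ne_zero
  have hGne : G ≠ 0 := mul_ne_zero (pow_ne_zero _ hX1) hPne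
  have hXC : (X - C (-1 : F)) = X + 1 := by rw [map_neg, map_one, sub_neg_eq_add]
  have hmult : n ≤ G.rootMultiplicity (-1) := by
    rw [Polynomial.le_rootMultiplicity_iff hGne, hXC]
    exact ⟨P, hG⟩
  have hfew := fewnomial_mult G.support.card G rfl hGne (-1) (neg_ne_zero.mpr one_ne_zero)
  omega
end

section
/- Let K be a simplicial complex and T ∈ K a face with |T| ≥ 2. The stellar subdivision Stellar(T, K) = (K \ st(T,K)) ∪ ({v_T} * ∂T * lk(T,K)), where v_T is a new vertex, is a simplicial complex. Moreover, for any u ∈ T, the vertices u and v_T in Stellar(T, K) satisfy the Link Condition lk(u, K') ∩ lk(v_T, K') = lk({u, v_T}, K') (where K' = Stellar(T,K)), and identifying v_T with u in K' recovers K. -/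
def IsComplex (K : Finset (Finset ℕ)) : Prop :=
  ∅ ∈ K ∧ ∀ s ∈ K, ∀ t ⊆ s, t ∈ K

/-- The (open) star `st(T,K) = {S ∈ K : T ⊆ S}`. -/
def starC (T : Finset ℕ) (K : Finset (Finset ℕ)) : Finset (Finset ℕ) :=
  K.filter fun s => T ⊆ s

/-- The link `lk(T,K) = {S ∈ K : S ∩ T = ∅, S ∪ T ∈ K}`. -/
def linkC (T : Finset ℕ) (K : Finset (Finset ℕ)) : Finset (Finset ℕ) :=
  K.filter fun s => s ∩ T = ∅ ∧ s ∪ T ∈ K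

/-- The boundary complex `∂T` of the simplex on `T`: all proper subsets of `T`. -/
def bdry (T : Finset ℕ) : Finset (Finset ℕ) := T.powerset.erase T

/-- The join of two complexes (on disjoint vertex sets). -/
def joinC (K L : Finset (Finset ℕ)) : Finset (Finset ℕ) :=
  (K ×ˢ L).image fun p => p.1 ∪ p.2

/-- The stellar subdivision
`Stellar(T,K) = (K \ st(T,K)) ∪ ({v_T} * ∂T * lk(T,K))`, with `v` the new
vertex `v_T`. -/
def stellar (T : Finset ℕ) (K : Finset (Finset ℕ)) (v : ℕ) : Finset (Finset ℕ) :=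
  (K \ starC T K) ∪ joinC (({v} : Finset ℕ).powerset) (joinC (bdry T) (linkC T K))

/-- Identifying vertex `a` with vertex `b` in a complex. -/
def identify (C : Finset (Finset ℕ)) (a b : ℕ) : Finset (Finset ℕ) :=
  C.image fun s => if a ∈ s then insert b (s.erase a) else s

/-!
Away from the new vertex `v` nothing changes: a set `S ∌ v` is a face of `Stellar(T,K)` iff it
is a face of `K` not containing `T`. A set `insert v S` with `S ∌ v` is a face iff `S ⊉ T` and
`S ∪ T ∈ K`, since the faces of `∂T * lk(T,K)` are exactly the sets `X ⊉ T` with `X ∪ T ∈ K`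
(split `X` into `X ∩ T` and `X \ T`). Everything else is read off this description: the link
condition because `S ∪ T` does not change when `u ∈ T` is added to `S`, and the identification
because `insert u S ⊆ S ∪ T ∈ K`, while a face `s ⊇ T` of `K` is the image of
`insert v (s.erase u)`.
-/

open Finset

lemma mem_joinC {K L : Finset (Finset ℕ)} {s : Finset ℕ} :
    s ∈ joinC K L ↔ ∃ a ∈ K, ∃ b ∈ L, a ∪ b = s := by
  simp [joinC, and_assoc]

lemma mem_joinC_powerset_singleton {L : Finset (Finset ℕ)} {v : ℕ} {S : Finset ℕ} :
    S ∈ joinC ({v} : Finset ℕ).powerset L ↔ ∃ X ∈ L, X = S ∨ insert v X = S := by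
  simp only [mem_joinC, mem_powerset, subset_singleton_iff]
  constructor
  · rintro ⟨a, rfl | rfl, X, hX, rfl⟩
    · exact ⟨X, hX, Or.inl (empty_union X).symm⟩
    · exact ⟨X, hX, Or.inr (insert_eq v X)⟩
  · rintro ⟨X, hX, rfl | rfl⟩
    · exact ⟨∅, Or.inl rfl, X, hX, empty_union X⟩
    · exact ⟨{v}, Or.inr rfl, X, hX, (insert_eq v X).symm⟩

lemma mem_linkC_singleton {C : Finset (Finset ℕ)} {a : ℕ} {S : Finset ℕ} :
    S ∈ linkC {a} C ↔ S ∈ C ∧ a ∉ S ∧ insert a S ∈ C := by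
  simp [linkC, ← disjoint_iff_inter_eq_empty]

lemma mem_linkC_pair {C : Finset (Finset ℕ)} {a b : ℕ} {S : Finset ℕ} :
    S ∈ linkC {a, b} C ↔ S ∈ C ∧ a ∉ S ∧ b ∉ S ∧ insert a (insert b S) ∈ C := by
  simp [linkC, ← disjoint_iff_inter_eq_empty, and_assoc]

lemma linkC_subset_linkC {C : Finset (Finset ℕ)} (hC : IsComplex C) {σ τ : Finset ℕ}
    (h : σ ⊆ τ) : linkC τ C ⊆ linkC σ C := by
  intro S hS
  simp only [linkC, mem_filter, ← disjoint_iff_inter_eq_empty] at hS ⊢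
  exact ⟨hS.1, hS.2.1.mono_right h, hC.2 _ hS.2.2 _ (union_subset_union_right h)⟩

lemma mem_joinC_bdry_linkC {K : Finset (Finset ℕ)} (hK : IsComplex K) {T X : Finset ℕ} :
    X ∈ joinC (bdry T) (linkC T K) ↔ ¬T ⊆ X ∧ X ∪ T ∈ K := by
  simp only [mem_joinC, bdry, linkC, mem_erase, mem_powerset, mem_filter,
    ← disjoint_iff_inter_eq_empty]
  constructor
  · rintro ⟨A, ⟨hAT, hA⟩, B, ⟨-, hBT, hBTK⟩, rfl⟩
    have hunion : A ∪ B ∪ T = B ∪ T := by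
      rw [union_comm A, union_assoc, union_eq_right.mpr hA]
    refine ⟨fun hT => hAT (hA.antisymm fun x hx => ?_), hunion ▸ hBTK⟩
    exact (mem_union.mp (hT hx)).resolve_right fun hxB => disjoint_left.mp hBT hxB hx
  · rintro ⟨hTX, hXT⟩
    refine ⟨X ∩ T, ⟨fun h => hTX (h ▸ inter_subset_left), inter_subset_right⟩, X \ T,
      ⟨hK.2 _ hXT _ (sdiff_subset.trans subset_union_left), sdiff_disjoint, ?_⟩,
      sup_inf_sdiff X T⟩
    rwa [sdiff_union_self_eq_union]

section Stellar

variable {K : Finset (Finset ℕ)} {T : Finset ℕ} {v : ℕ}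

lemma mem_stellar_of_notMem (hK : IsComplex K) {S : Finset ℕ} (hvS : v ∉ S) :
    S ∈ stellar T K v ↔ S ∈ K ∧ ¬T ⊆ S := by
  simp only [stellar, starC, mem_union, mem_sdiff, mem_filter, mem_joinC_powerset_singleton,
    mem_joinC_bdry_linkC hK]
  constructor
  · rintro (⟨hSK, hTS⟩ | ⟨X, ⟨hTX, hXT⟩, rfl | rfl⟩)
    · exact ⟨hSK, fun h => hTS ⟨hSK, h⟩⟩
    · exact ⟨hK.2 _ hXT _ subset_union_left, hTX⟩
    · exact absurd (mem_insert_self v X) hvS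
  · exact fun ⟨hSK, hTS⟩ => Or.inl ⟨hSK, fun h => hTS h.2⟩

lemma insert_mem_stellar (hK : IsComplex K) (hv : ∀ s ∈ K, v ∉ s) {S : Finset ℕ}
    (hvS : v ∉ S) : insert v S ∈ stellar T K v ↔ ¬T ⊆ S ∧ S ∪ T ∈ K := by
  simp only [stellar, starC, mem_union, mem_sdiff, mem_filter, mem_joinC_powerset_singleton,
    mem_joinC_bdry_linkC hK]
  constructor
  · rintro (⟨hK', -⟩ | ⟨X, ⟨hTX, hXT⟩, hX | hX⟩)
    · exact absurd (mem_insert_self v S) (hv _ hK')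
    · exact absurd (mem_union_left T (hX ▸ mem_insert_self v S)) (hv _ hXT)
    · have hvX : v ∉ X := fun h => hv _ hXT (mem_union_left T h)
      obtain rfl : X = S := by rw [← erase_insert hvX, hX, erase_insert hvS]
      exact ⟨hTX, hXT⟩
  · exact fun h => Or.inr ⟨S, h, Or.inr rfl⟩

theorem stellar_isComplex (hK : IsComplex K) (hv : ∀ s ∈ K, v ∉ s) (hT : T.Nonempty) :
    IsComplex (stellar T K v) := by
  refine ⟨(mem_stellar_of_notMem hK (notMem_empty v)).mpr
    ⟨hK.1, fun h => hT.ne_empty (subset_empty.mp h)⟩, fun s hs t hts => ?_⟩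
  by_cases hvs : v ∈ s
  · rw [← insert_erase hvs, insert_mem_stellar hK hv (notMem_erase v s)] at hs
    obtain ⟨hTs, hsT⟩ := hs
    by_cases hvt : v ∈ t
    · have hts' : t.erase v ⊆ s.erase v := erase_subset_erase v hts
      rw [← insert_erase hvt, insert_mem_stellar hK hv (notMem_erase v t)]
      exact ⟨fun h => hTs (h.trans hts'), hK.2 _ hsT _ (union_subset_union_left hts')⟩
    · have hts' : t ⊆ s.erase v := subset_erase.mpr ⟨hts, hvt⟩
      rw [mem_stellar_of_notMem hK hvt]
      exact ⟨hK.2 _ hsT _ (hts'.trans subset_union_left), fun h => hTs (h.trans hts')⟩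
  · rw [mem_stellar_of_notMem hK hvs] at hs
    rw [mem_stellar_of_notMem hK fun h => hvs (hts h)]
    exact ⟨hK.2 _ hs.1 _ hts, fun h => hs.2 (h.trans hts)⟩

theorem stellar_linkCondition (hK : IsComplex K) (hv : ∀ s ∈ K, v ∉ s) (hT : T.Nonempty)
    {u : ℕ} (hu : u ∈ T) :
    linkC {u} (stellar T K v) ∩ linkC {v} (stellar T K v) = linkC {u, v} (stellar T K v) := by
  have hC := stellar_isComplex hK hv hT
  refine subset_antisymm (fun S hS => ?_) (subset_inter
    (linkC_subset_linkC hC (by simp)) (linkC_subset_linkC hC (by simp)))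
  simp only [mem_inter, mem_linkC_singleton] at hS
  obtain ⟨⟨hS, huS, huSC⟩, -, hvS, hvSC⟩ := hS
  obtain ⟨hTS, hST⟩ := (insert_mem_stellar hK hv hvS).mp hvSC
  have huv : u ≠ v := fun h => hv _ hST (mem_union_right S (h ▸ hu))
  have hvuS : v ∉ insert u S := by simp [hvS, huv.symm]
  have hTuS : ¬T ⊆ insert u S := ((mem_stellar_of_notMem hK hvuS).mp huSC).2
  rw [mem_linkC_pair, insert_comm, insert_mem_stellar hK hv hvuS, insert_union,
    insert_eq_of_mem (mem_union_right S hu)]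
  exact ⟨hS, huS, hvS, hTuS, hST⟩

theorem identify_stellar (hK : IsComplex K) (hv : ∀ s ∈ K, v ∉ s) {u : ℕ} (hu : u ∈ T) :
    identify (stellar T K v) v u = K := by
  ext s
  simp only [identify, mem_image]
  constructor
  · rintro ⟨a, ha, rfl⟩
    split_ifs with hva
    · rw [← insert_erase hva, insert_mem_stellar hK hv (notMem_erase v a)] at ha
      exact hK.2 _ ha.2 _ (insert_subset (mem_union_right _ hu) subset_union_left)
    · exact ((mem_stellar_of_notMem hK hva).mp ha).1
  · intro hs
    by_cases hTs : T ⊆ s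
    · have hvs : v ∉ s.erase u := fun h => hv s hs (mem_of_mem_erase h)
      refine ⟨insert v (s.erase u), (insert_mem_stellar hK hv hvs).mpr
        ⟨fun h => notMem_erase u s (h hu), ?_⟩, ?_⟩
      · rwa [erase_union_of_mem hu, union_eq_left.mpr hTs]
      · rw [if_pos (mem_insert_self v _), erase_insert hvs, insert_erase (hTs hu)]
    · exact ⟨s, (mem_stellar_of_notMem hK (hv s hs)).mpr ⟨hs, hTs⟩, if_neg (hv s hs)⟩

end Stellar

theorem stellar_isComplex_linkCondition_identify_general
    (K : Finset (Finset ℕ)) (T : Finset ℕ) (v : ℕ)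
    (hK : IsComplex K) (hT2 : 2 ≤ T.card)
    (hv : ∀ s ∈ K, v ∉ s) :
    IsComplex (stellar T K v) ∧
    ∀ u ∈ T,
      linkC {u} (stellar T K v) ∩ linkC {v} (stellar T K v) =
        linkC {u, v} (stellar T K v) ∧
      identify (stellar T K v) v u = K := by
  have hT : T.Nonempty := card_pos.mp (by omega)
  exact ⟨stellar_isComplex hK hv hT, fun u hu =>
    ⟨stellar_linkCondition hK hv hT hu, identify_stellar hK hv hu⟩⟩

/-- for a face `T` of `K` with `|T| ≥ 2` and a new vertex
`v_T ∉ K`, the stellar subdivision `Stellar(T,K)` is a simplicial complex;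
moreover for every `u ∈ T` the vertices `u` and `v_T` satisfy the Link
Condition `lk(u,K') ∩ lk(v_T,K') = lk({u,v_T},K')` in `K' = Stellar(T,K)`,
and identifying `v_T` with `u` in `K'` recovers `K`. -/
theorem stellar_isComplex_linkCondition_identify
    (K : Finset (Finset ℕ)) (T : Finset ℕ) (v : ℕ)
    (hK : IsComplex K) (hT : T ∈ K) (hT2 : 2 ≤ T.card)
    (hv : ∀ s ∈ K, v ∉ s) :
    IsComplex (stellar T K v) ∧
    ∀ u ∈ T,
      linkC {u} (stellar T K v) ∩ linkC {v} (stellar T K v) =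
        linkC {u, v} (stellar T K v) ∧
      identify (stellar T K v) v u = K :=
  stellar_isComplex_linkCondition_identify_general K T v hK hT2 hv
end

section
/- A shifted pure (d-1)-dimensional simplicial complex Δ on vertex set [n] satisfies Δ ⊆ Δ(d,n) if and only if Δ contains none of the sets T_{d-k} = {k+2, k+3, ..., d-k} ∪ {d-k+2, d-k+3, ..., d+2} for 0 ≤ k ≤ ⌊d/2⌋, where Δ(d,n) is the complex with facets {S ⊆ [n] : |S| = d, and for all k, k ∉ S implies [k+1, d-k+2] ⊆ S}. -/
/-- A complex on `[n] = {1,...,n}` is shifted if replacing any element of a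
face by a smaller (positive) one again yields a face. -/
def IsShifted (Δ : Finset (Finset ℕ)) : Prop :=
  ∀ S ∈ Δ, ∀ j ∈ S, ∀ i : ℕ, 1 ≤ i → i < j → insert i (S.erase j) ∈ Δ

/-- `S` is a facet of `Δ(d,n)`: a `d`-subset of `[n]` such that whenever
`k ∉ S` (for `k ≥ 1`) the interval `[k+1, d-k+2]` is contained in `S`. -/
def IsDeltaFacet (d n : ℕ) (S : Finset ℕ) : Prop :=
  S ⊆ Finset.Icc 1 n ∧ S.card = d ∧
  ∀ k : ℕ, 1 ≤ k → k ∉ S → Finset.Icc (k + 1) (d + 2 - k) ⊆ S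

/-- `T_{d-k} = {k+2, ..., d-k} ∪ {d-k+2, ..., d+2}`. -/
def Tset (d k : ℕ) : Finset ℕ :=
  Finset.Icc (k + 2) (d - k) ∪ Finset.Icc (d + 2 - k) (d + 2)

lemma filter_Icc_card (a b x : ℕ) :
    ((Finset.Icc a b).filter (fun y => x ≤ y)).card = b + 1 - max a x := by
  have h : (Finset.Icc a b).filter (fun y => x ≤ y) = Finset.Icc (max a x) b := by
    ext y; simp [Finset.mem_filter, Finset.mem_Icc]; omega
  rw [h, Nat.card_Icc]

lemma swap_aux (Δ : Finset (Finset ℕ)) (hs : IsShifted Δ)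
    (T : Finset ℕ) (hT : T ∈ Δ) (U : Finset ℕ) (hU1 : ∀ u ∈ U, 1 ≤ u)
    (hcount : ∀ x : ℕ, (U.filter (fun y => x ≤ y)).card ≤ (T.filter (fun y => x ≤ y)).card)
    (hUT : ¬ U ⊆ T) :
    ∃ T' ∈ Δ, T'.sum id < T.sum id ∧
      ∀ x : ℕ, (U.filter (fun y => x ≤ y)).card ≤ (T'.filter (fun y => x ≤ y)).card := by
  have hne : (U \ T).Nonempty := by rwa [Finset.sdiff_nonempty]
  set u := (U \ T).max' hne with hu
  have humem : u ∈ U \ T := Finset.max'_mem _ hne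
  have huU : u ∈ U := (Finset.mem_sdiff.mp humem).1
  have huT : u ∉ T := (Finset.mem_sdiff.mp humem).2
  have hmax : ∀ v ∈ U, u < v → v ∈ T := by
    intro v hv hlt
    by_contra hvT
    exact absurd (Finset.le_max' _ v (Finset.mem_sdiff.mpr ⟨hv, hvT⟩)) (not_le.mpr hlt)
  have hex : ∃ t ∈ T, u < t ∧ t ∉ U := by
    by_contra hno
    push_neg at hno
    have hsub : T.filter (fun y => u ≤ y) ⊆ (U.filter (fun y => u ≤ y)).erase u := by
      intro t ht
      obtain ⟨htT, hut⟩ := Finset.mem_filter.mp ht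
      have htu : u < t := lt_of_le_of_ne hut (by rintro rfl; exact huT htT)
      exact Finset.mem_erase.mpr ⟨(Nat.ne_of_gt htu), Finset.mem_filter.mpr ⟨hno t htT htu, hut⟩⟩
    have h1 : u ∈ U.filter (fun y => u ≤ y) := Finset.mem_filter.mpr ⟨huU, le_refl u⟩
    have h2 := Finset.card_le_card hsub
    rw [Finset.card_erase_of_mem h1] at h2
    have h3 := hcount u
    have h4 : 1 ≤ (U.filter (fun y => u ≤ y)).card := Finset.card_pos.mpr ⟨u, h1⟩
    omega
  obtain ⟨t, htT, hut, htU⟩ := hex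
  have hu1 : 1 ≤ u := hU1 u huU
  refine ⟨insert u (T.erase t), hs T hT t htT u hu1 hut, ?_, ?_⟩
  · have h1 : u ∉ T.erase t := fun h => huT (Finset.mem_of_mem_erase h)
    rw [Finset.sum_insert h1]
    have h2 : (T.erase t).sum id + t = T.sum id := by
      have := Finset.sum_erase_add T id htT
      simpa using this
    simp only [id_eq] at h2 ⊢
    omega
  · intro x
    have hcnt := hcount x
    have h1 : u ∉ (T.erase t).filter (fun y => x ≤ y) :=
      fun h => huT (Finset.mem_of_mem_erase (Finset.mem_filter.mp h).1)
    have hins : ((insert u (T.erase t)).filter (fun y => x ≤ y)).card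
        = ((T.erase t).filter (fun y => x ≤ y)).card + (if x ≤ u then 1 else 0) := by
      rw [Finset.filter_insert]
      split_ifs with h
      · rw [Finset.card_insert_of_notMem h1]
      · omega
    rw [hins, Finset.filter_erase, Finset.card_erase_eq_ite]
    by_cases hxu : x ≤ u
    · have hxt : t ∈ T.filter (fun y => x ≤ y) :=
        Finset.mem_filter.mpr ⟨htT, le_trans hxu (le_of_lt hut)⟩
      rw [if_pos hxt, if_pos hxu]
      have h1c : 1 ≤ (T.filter (fun y => x ≤ y)).card := Finset.card_pos.mpr ⟨t, hxt⟩
      omega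
    · rw [if_neg hxu]
      by_cases hxt : x ≤ t
      · have htf : t ∈ T.filter (fun y => x ≤ y) := Finset.mem_filter.mpr ⟨htT, hxt⟩
        rw [if_pos htf]
        have hsub2 : U.filter (fun y => x ≤ y) ⊆ (T.filter (fun y => x ≤ y)).erase t := by
          intro v hv
          obtain ⟨hvU, hxv⟩ := Finset.mem_filter.mp hv
          refine Finset.mem_erase.mpr ⟨fun h => htU (h ▸ hvU),
            Finset.mem_filter.mpr ⟨hmax v hvU (by omega), hxv⟩⟩
        have h5 := Finset.card_le_card hsub2
        rw [Finset.card_erase_of_mem htf] at h5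
        omega
      · have htf : t ∉ T.filter (fun y => x ≤ y) := fun h => hxt (Finset.mem_filter.mp h).2
        rw [if_neg htf]
        omega

lemma dominated_mem (Δ : Finset (Finset ℕ)) (hΔ : IsComplex Δ) (hs : IsShifted Δ) :
    ∀ N : ℕ, ∀ T ∈ Δ, T.sum id ≤ N → ∀ U : Finset ℕ, (∀ u ∈ U, 1 ≤ u) →
    (∀ x : ℕ, (U.filter (fun y => x ≤ y)).card ≤ (T.filter (fun y => x ≤ y)).card) →
    U ∈ Δ := by
  intro N
  induction N with
  | zero =>
    intro T hT hsum U hU1 hcount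
    by_cases hUT : U ⊆ T
    · exact hΔ.2 T hT U hUT
    · obtain ⟨T', _, hlt, _⟩ := swap_aux Δ hs T hT U hU1 hcount hUT
      omega
  | succ n ih =>
    intro T hT hsum U hU1 hcount
    by_cases hUT : U ⊆ T
    · exact hΔ.2 T hT U hUT
    · obtain ⟨T', hT', hlt, hc'⟩ := swap_aux Δ hs T hT U hU1 hcount hUT
      exact ih T' hT' (by omega) U hU1 hc'

/-- a shifted pure `(d-1)`-dimensional complex `Δ` on `[n]`
satisfies `Δ ⊆ Δ(d,n)` (every face lies in a facet of `Δ(d,n)`) if and only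
if `Δ` contains none of the sets `T_{d-k}`, `0 ≤ k ≤ ⌊d/2⌋`. -/
theorem shifted_subset_Delta_iff_no_Tsets
    (d n : ℕ) (Δ : Finset (Finset ℕ))
    (hΔ : IsComplex Δ) (hshift : IsShifted Δ)
    (hvert : ∀ S ∈ Δ, S ⊆ Finset.Icc 1 n)
    (hdim : ∀ S ∈ Δ, S.card ≤ d)
    (hpure : ∀ S ∈ Δ, ∃ T ∈ Δ, S ⊆ T ∧ T.card = d) :
    (∀ S ∈ Δ, ∃ T : Finset ℕ, IsDeltaFacet d n T ∧ S ⊆ T) ↔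
      ∀ k ≤ d / 2, Tset d k ∉ Δ := by
  constructor
  · -- forward
    intro h k hk hmem
    obtain ⟨F, ⟨hFv, hFc, hFk⟩, hsubF⟩ := h _ hmem
    have hC2 : 2 ≤ (Finset.Icc 1 (d+2) \ F).card := by
      have h1 := Finset.card_le_card_sdiff_add_card (s := Finset.Icc 1 (d+2)) (t := F)
      rw [Nat.card_Icc] at h1
      omega
    obtain ⟨a, ha, b, hb, hab⟩ := Finset.one_lt_card.mp (show 1 < (Finset.Icc 1 (d+2) \ F).card by omega)
    have hprop : ∀ c ∈ Finset.Icc 1 (d+2) \ F,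
        1 ≤ c ∧ c ∉ F ∧ (c ≤ k + 1 ∨ c = d + 1 - k) := by
      intro c hc
      obtain ⟨hc1, hc2⟩ := Finset.mem_sdiff.mp hc
      obtain ⟨hcl, hcr⟩ := Finset.mem_Icc.mp hc1
      have hcT : c ∉ Tset d k := fun h' => hc2 (hsubF h')
      simp only [Tset, Finset.mem_union, Finset.mem_Icc, not_or, not_and] at hcT
      have h2k : 2 * k ≤ d := by omega
      refine ⟨hcl, hc2, ?_⟩
      omega
    obtain ⟨h1a, h2a, h3a⟩ := hprop a ha
    obtain ⟨h1b, h2b, h3b⟩ := hprop b hb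
    have h2k : 2 * k ≤ d := by omega
    rcases Nat.lt_or_ge a b with hlt | hge
    · have := hFk a h1a h2a (Finset.mem_Icc.mpr (show a + 1 ≤ b ∧ b ≤ d + 2 - a by omega))
      exact h2b this
    · have hlt : b < a := by omega
      have := hFk b h1b h2b (Finset.mem_Icc.mpr (show b + 1 ≤ a ∧ a ≤ d + 2 - b by omega))
      exact h2a this
  · -- reverse
    intro hno S hS
    obtain ⟨T, hTmem, hST, hTcard⟩ := hpure S hS
    refine ⟨T, ⟨hvert T hTmem, hTcard, ?_⟩, hST⟩
    intro k hk1 hkT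
    by_contra hnsub
    obtain ⟨m, hmI, hmT⟩ := Finset.not_subset.mp hnsub
    obtain ⟨hm1, hm2⟩ := Finset.mem_Icc.mp hmI
    -- so 1 ≤ k, k ∉ T, k+1 ≤ m ≤ d+2-k, m ∉ T
    have hdk : 2 * k ≤ d + 1 := by omega
    have hU1 : ∀ u ∈ Tset d (k-1), 1 ≤ u := by
      intro u hu
      simp only [Tset, Finset.mem_union, Finset.mem_Icc] at hu
      omega
    have hcount : ∀ x : ℕ, ((Tset d (k-1)).filter (fun y => x ≤ y)).card
        ≤ (T.filter (fun y => x ≤ y)).card := by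
      intro x
      have hdisj : Disjoint ((Finset.Icc (k-1+2) (d-(k-1))).filter (fun y => x ≤ y))
          ((Finset.Icc (d+2-(k-1)) (d+2)).filter (fun y => x ≤ y)) := by
        rw [Finset.disjoint_left]
        intro c hc1 hc2
        simp only [Finset.mem_filter, Finset.mem_Icc] at hc1 hc2
        omega
      have hLHS : ((Tset d (k-1)).filter (fun y => x ≤ y)).card
          = (d - (k-1) + 1 - max (k-1+2) x) + (d + 2 + 1 - max (d+2-(k-1)) x) := by
        rw [Tset, Finset.filter_union, Finset.card_union_of_disjoint hdisj,
          filter_Icc_card, filter_Icc_card]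
      -- split T
      have hsplit : (T.filter (fun y => x ≤ y)).card
          + (T.filter (fun y => ¬ x ≤ y)).card = d := by
        rw [Finset.card_filter_add_card_filter_not, hTcard]
      have hlow : T.filter (fun y => ¬ x ≤ y) ⊆ ((Finset.Icc 1 (x-1)).erase k).erase m := by
        intro y hy
        obtain ⟨hyT, hyx⟩ := Finset.mem_filter.mp hy
        have hy1 : 1 ≤ y := (Finset.mem_Icc.mp (hvert T hTmem hyT)).1
        refine Finset.mem_erase.mpr ⟨fun h => hmT (h ▸ hyT),
          Finset.mem_erase.mpr ⟨fun h => hkT (h ▸ hyT), Finset.mem_Icc.mpr ⟨hy1, by omega⟩⟩⟩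
      have hlowc := Finset.card_le_card hlow
      have hE : (((Finset.Icc 1 (x-1)).erase k).erase m).card
          = x - 1 - (if 1 ≤ k ∧ k ≤ x-1 then 1 else 0) - (if 1 ≤ m ∧ m ≤ x-1 then 1 else 0) := by
        rw [Finset.card_erase_eq_ite, Finset.card_erase_eq_ite]
        simp only [Finset.mem_erase, Finset.mem_Icc, Nat.card_Icc]
        have hkm : k ≠ m := by omega
        split_ifs <;> omega
      rw [hLHS]
      by_cases hkx : k ≤ x - 1 <;> by_cases hmx : m ≤ x - 1 <;>
        simp only [if_pos, if_neg, hkx, hmx, hk1, show (1:ℕ) ≤ m by omega, true_and] at hE <;>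
        omega
    have hmemU : Tset d (k-1) ∈ Δ :=
      dominated_mem Δ hΔ hshift (T.sum id) T hTmem le_rfl _ hU1 hcount
    exact hno (k-1) (by omega) hmemU
end

section
/- Let K be a simplicial complex obtained from a sequence of Stellar subdivisions realizing the barycentric subdivision: ordering the faces of K of dimension ≥ 1 by weakly decreasing cardinality and performing stellar subdivisions at these faces in that order yields the barycentric subdivision sd(K), whose faces are the chains of nonempty faces of K ordered by inclusion. -/
/-- The barycentric subdivision `sd(K)`: vertices are the nonempty faces of
`K`, and faces are the chains of nonempty faces of `K` under inclusion. -/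
def sd (K : Finset (Finset ℕ)) : Finset (Finset (Finset ℕ)) :=
  (K.erase ∅).powerset.filter fun c => ∀ a ∈ c, ∀ b ∈ c, a ⊆ b ∨ b ⊆ a

/-!
Subdivide the faces in order of decreasing size. Once the faces of an upward closed family `S`
have been subdivided, the faces of the complex are the sets `σ ∪ {v_T | T ∈ c}`, where `σ` is a
face of `K` containing no member of `S` and `c` is a chain in `S` whose members all strictly
contain `σ`. Every face strictly containing the next face `T` is already subdivided, so the faces
of the current complex containing `T` are exactly the sets `T ∪ {v_T' | T' ∈ c}`, and
`Stellar(T, ·)` turns the description for `S` into the one for `S ∪ {T}`. When all faces with at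
least two vertices are subdivided, `σ` is empty or a vertex, and `v_T ↦ T`, `x ↦ {x}` maps the
faces onto the chains of nonempty faces of `K`.
-/

open Finset

lemma mem_stellar {T : Finset ℕ} {C : Finset (Finset ℕ)} {v : ℕ} {s : Finset ℕ} :
    s ∈ stellar T C v ↔ (s ∈ C ∧ ¬ T ⊆ s) ∨
      ∃ b ⊂ T, ∃ l ∈ C, Disjoint l T ∧ l ∪ T ∈ C ∧ (s = b ∪ l ∨ s = insert v (b ∪ l)) := by
  simp only [stellar, starC, joinC, bdry, linkC, mem_union, mem_sdiff, mem_filter, mem_image,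
    mem_product, mem_powerset, mem_erase, Prod.exists, ssubset_iff_subset_ne,
    disjoint_iff_inter_eq_empty, subset_singleton_iff]
  constructor
  · rintro (⟨hs, hTs⟩ | ⟨e, _, ⟨he, b, l, ⟨⟨hb, hbT⟩, hl, hlT, hlTC⟩, rfl⟩, rfl⟩)
    · exact Or.inl ⟨hs, fun h => hTs ⟨hs, h⟩⟩
    · refine Or.inr ⟨b, ⟨hbT, hb⟩, l, hl, hlT, hlTC, ?_⟩
      rcases he with rfl | rfl
      · exact Or.inl (empty_union _)
      · exact Or.inr (insert_eq v _).symm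
  · rintro (⟨hs, hTs⟩ | ⟨b, ⟨hbT, hb⟩, l, hl, hlT, hlTC, rfl | rfl⟩)
    · exact Or.inl ⟨hs, fun h => hTs h.2⟩
    · exact Or.inr ⟨∅, _, ⟨Or.inl rfl, b, l, ⟨⟨hb, hbT⟩, hl, hlT, hlTC⟩, rfl⟩, empty_union _⟩
    · exact Or.inr ⟨{v}, _, ⟨Or.inr rfl, b, l, ⟨⟨hb, hbT⟩, hl, hlT, hlTC⟩, rfl⟩, insert_eq v _⟩

structure IsPartialSdFace (K S : Finset (Finset ℕ)) (σ : Finset ℕ) (c : Finset (Finset ℕ)) :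
    Prop where
  mem : σ ∈ K
  subset : c ⊆ S
  chain : ∀ a ∈ c, ∀ b ∈ c, a ⊆ b ∨ b ⊆ a
  not_subset : ∀ T ∈ S, ¬ T ⊆ σ
  ssubset : ∀ T ∈ c, σ ⊂ T

open Classical in
/-- For `S` closed upwards in `K`, the complex obtained from `K` by stellar subdivision at the
members `T` of `S` in order of decreasing size, with new vertices `ν T`. -/
noncomputable def partialSd (K S : Finset (Finset ℕ)) (ν : Finset ℕ → ℕ) :
    Finset (Finset ℕ) :=
  ((K ×ˢ S.powerset).filter fun p => IsPartialSdFace K S p.1 p.2).image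
    fun p => p.1 ∪ p.2.image ν

section PartialSd

variable {K S : Finset (Finset ℕ)} {ν : Finset ℕ → ℕ} {σ T : Finset ℕ}
  {c : Finset (Finset ℕ)}

lemma mem_partialSd {s : Finset ℕ} :
    s ∈ partialSd K S ν ↔ ∃ σ c, IsPartialSdFace K S σ c ∧ σ ∪ c.image ν = s := by
  simp only [partialSd, mem_image, mem_filter, mem_product, mem_powerset, Prod.exists]
  exact ⟨fun ⟨σ, c, ⟨_, h⟩, hs⟩ => ⟨σ, c, h, hs⟩,
    fun ⟨σ, c, h, hs⟩ => ⟨σ, c, ⟨⟨h.mem, h.subset⟩, h⟩, hs⟩⟩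

lemma partialSd_empty : partialSd K ∅ ν = K := by
  ext s
  rw [mem_partialSd]
  constructor
  · rintro ⟨σ, c, h, rfl⟩
    rw [subset_empty.1 h.subset, image_empty, union_empty]
    exact h.mem
  · intro hs
    exact ⟨s, ∅, ⟨hs, subset_rfl, by simp, by simp, by simp⟩, by simp⟩

lemma disjoint_image_of_fresh (hfresh : ∀ T : Finset ℕ, ∀ s ∈ K, ν T ∉ s) {U : Finset ℕ}
    (hU : U ∈ K) (c : Finset (Finset ℕ)) : Disjoint (c.image ν) U := by
  simp only [disjoint_left, mem_image]
  rintro _ ⟨T, -, rfl⟩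
  exact hfresh T U hU

lemma subset_of_subset_union_image (hfresh : ∀ T : Finset ℕ, ∀ s ∈ K, ν T ∉ s) {U : Finset ℕ}
    (hU : U ∈ K) (h : U ⊆ σ ∪ c.image ν) : U ⊆ σ :=
  Disjoint.left_le_of_le_sup_right h (disjoint_image_of_fresh hfresh hU c).symm

namespace IsPartialSdFace

lemma insert_of_not_subset (h : IsPartialSdFace K S σ c) (hT : ¬ T ⊆ σ) :
    IsPartialSdFace K (insert T S) σ c where
  mem := h.mem
  subset := h.subset.trans (subset_insert T S)
  chain := h.chain
  not_subset T' hT' := by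
    rcases mem_insert.1 hT' with rfl | hT'
    exacts [hT, h.not_subset T' hT']
  ssubset := h.ssubset

lemma of_insert_of_notMem (h : IsPartialSdFace K (insert T S) σ c) (hTc : T ∉ c) :
    IsPartialSdFace K S σ c where
  mem := h.mem
  subset := (subset_insert_iff_of_notMem hTc).1 h.subset
  chain := h.chain
  not_subset T' hT' := h.not_subset T' (mem_insert_of_mem hT')
  ssubset := h.ssubset

lemma insert_of_ssubset (hK : IsComplex K) (hTS : ∀ T' ∈ S, ¬ T' ⊆ T)
    (h : IsPartialSdFace K S T c) {b : Finset ℕ} (hb : b ⊂ T) :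
    IsPartialSdFace K (insert T S) b c where
  mem := hK.2 T h.mem b hb.subset
  subset := h.subset.trans (subset_insert T S)
  chain := h.chain
  not_subset T' hT' hT'b := by
    rcases mem_insert.1 hT' with rfl | hT'
    exacts [hb.2 hT'b, hTS T' hT' (hT'b.trans hb.subset)]
  ssubset T' hT' := hb.trans (h.ssubset T' hT')

lemma insert_chain (h : IsPartialSdFace K (insert T S) σ c) (hσ : σ ⊂ T)
    (hc : ∀ T' ∈ c, T ⊆ T') : IsPartialSdFace K (insert T S) σ (insert T c) where
  mem := h.mem
  subset := insert_subset (mem_insert_self T S) h.subset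
  chain a ha b hb := by
    rcases mem_insert.1 ha with rfl | hac <;> rcases mem_insert.1 hb with rfl | hbc
    exacts [Or.inl subset_rfl, Or.inl (hc b hbc), Or.inr (hc a hac), h.chain a hac b hbc]
  not_subset := h.not_subset
  ssubset T' hT' := by
    rcases mem_insert.1 hT' with rfl | hT'
    exacts [hσ, h.ssubset T' hT']

lemma erase (h : IsPartialSdFace K (insert T S) σ c) (hTS : ∀ T' ∈ S, ¬ T' ⊆ T) (hTc : T ∈ c)
    {ρ : Finset ℕ} (hρ : ρ ∈ K) (hρT : ρ ⊆ T) (hρS : ∀ T' ∈ S, ¬ T' ⊆ ρ) :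
    IsPartialSdFace K S ρ (c.erase T) := by
  have hsub : c.erase T ⊆ S := fun T' hT' =>
    (mem_insert.1 (h.subset (mem_of_mem_erase hT'))).resolve_left (ne_of_mem_erase hT')
  refine ⟨hρ, hsub, fun a ha b hb => h.chain a (mem_of_mem_erase ha) b (mem_of_mem_erase hb),
    hρS, fun T' hT' => ?_⟩
  rcases h.chain T hTc T' (mem_of_mem_erase hT') with hTT' | hT'T
  · exact hρT.trans_ssubset (hTT'.ssubset_of_ne (ne_of_mem_erase hT').symm)
  · exact absurd hT'T (hTS T' (hsub hT'))

lemma eq_of_subset_union (hfresh : ∀ T : Finset ℕ, ∀ s ∈ K, ν T ∉ s) (hT : T ∈ K)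
    (hup : ∀ T' ∈ K, T ⊂ T' → T' ∈ S) (h : IsPartialSdFace K S σ c)
    (hTs : T ⊆ σ ∪ c.image ν) : σ = T := by
  have hTσ : T ⊆ σ := subset_of_subset_union_image hfresh hT hTs
  by_contra hne
  exact h.not_subset σ (hup σ h.mem (hTσ.ssubset_of_ne (Ne.symm hne))) subset_rfl

end IsPartialSdFace

theorem stellar_partialSd (hK : IsComplex K) (hfresh : ∀ T : Finset ℕ, ∀ s ∈ K, ν T ∉ s)
    (hT : T ∈ K) (hTS : ∀ T' ∈ S, ¬ T' ⊆ T) (hup : ∀ T' ∈ K, T ⊂ T' → T' ∈ S) (hS : ∅ ∉ S) :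
    stellar T (partialSd K S ν) (ν T) = partialSd K (insert T S) ν := by
  ext s
  rw [mem_stellar, mem_partialSd (S := insert T S)]
  constructor
  · rintro (⟨hs, hTs⟩ | ⟨b, hb, l, -, hlT, hlTC, hs⟩)
    · obtain ⟨σ, c, h, rfl⟩ := mem_partialSd.1 hs
      exact ⟨σ, c, h.insert_of_not_subset fun hTσ => hTs (hTσ.trans subset_union_left), rfl⟩
    · obtain ⟨σ, c, h, hσc⟩ := mem_partialSd.1 hlTC
      obtain rfl : T = σ := (h.eq_of_subset_union hfresh hT hup (hσc ▸ subset_union_right)).symm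
      obtain rfl : l = c.image ν := by
        rw [← union_sdiff_cancel_right hlT, ← hσc, union_comm,
          union_sdiff_cancel_right (disjoint_image_of_fresh hfresh hT c)]
      have hb' := h.insert_of_ssubset hK hTS hb
      rcases hs with rfl | rfl
      · exact ⟨b, c, hb', rfl⟩
      · refine ⟨b, insert T c, hb'.insert_chain hb fun T' hT' => (h.ssubset T' hT').subset, ?_⟩
        rw [image_insert, union_insert]
  · rintro ⟨σ, c, h, rfl⟩
    by_cases hTc : T ∈ c
    · have hS' : ∀ T' ∈ S, ¬ T' ⊆ ∅ := fun T' hT' h0 => hS (subset_empty.1 h0 ▸ hT')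
      refine Or.inr ⟨σ, h.ssubset T hTc, (c.erase T).image ν,
        mem_partialSd.2 ⟨∅, c.erase T, h.erase hTS hTc hK.1 (empty_subset T) hS', empty_union _⟩,
        disjoint_image_of_fresh hfresh hT _,
        mem_partialSd.2 ⟨T, c.erase T, h.erase hTS hTc hT subset_rfl hTS, union_comm _ _⟩,
        Or.inr ?_⟩
      rw [← union_insert, ← image_insert, insert_erase hTc]
    · exact Or.inl ⟨mem_partialSd.2 ⟨σ, c, h.of_insert_of_notMem hTc, rfl⟩, fun hTs =>
        h.not_subset T (mem_insert_self T S) (subset_of_subset_union_image hfresh hT hTs)⟩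

theorem foldl_stellar_eq_partialSd (hK : IsComplex K)
    (hfresh : ∀ T : Finset ℕ, ∀ s ∈ K, ν T ∉ s) {L : List (Finset ℕ)} (hLK : ∀ T ∈ L, T ∈ K)
    (hL : ∅ ∉ L) (hup : ∀ T ∈ L, ∀ T' ∈ K, T ⊂ T' → T' ∈ L) (hnodup : L.Nodup)
    (hsorted : L.Pairwise fun a b => b.card ≤ a.card) :
    L.foldl (fun C T => stellar T C (ν T)) K = partialSd K L.toFinset ν := by
  induction L using List.reverseRecOn with
  | nil => exact partialSd_empty.symm
  | append_singleton l T ih =>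
    simp only [List.mem_append, List.mem_singleton] at hLK hL hup
    rw [List.nodup_append] at hnodup
    rw [List.pairwise_append] at hsorted
    have hTl : ∀ T' ∈ l, T' ≠ T := fun T' hT' =>
      hnodup.2.2 T' hT' T (List.mem_singleton_self T)
    have hcard : ∀ T' ∈ l, T.card ≤ T'.card := fun T' hT' =>
      hsorted.2.2 T' hT' T (List.mem_singleton_self T)
    have hTS : ∀ T' ∈ l, ¬ T' ⊆ T := fun T' hT' h =>
      hTl T' hT' (eq_of_subset_of_card_le h (hcard T' hT'))
    have hlup : ∀ T₀ ∈ l, ∀ T' ∈ K, T₀ ⊂ T' → T' ∈ l := by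
      intro T₀ hT₀ T' hT' hT₀T'
      refine (hup T₀ (Or.inl hT₀) T' hT' hT₀T').resolve_right ?_
      rintro rfl
      exact absurd (card_lt_card hT₀T') (not_lt.2 (hcard T₀ hT₀))
    have hTup : ∀ T' ∈ K, T ⊂ T' → T' ∈ l.toFinset := fun T' hT' hTT' =>
      List.mem_toFinset.2 ((hup T (Or.inr rfl) T' hT' hTT').resolve_right hTT'.ne')
    rw [List.foldl_append, List.foldl_cons, List.foldl_nil,
      ih (fun T' hT' => hLK T' (Or.inl hT')) (fun h => hL (Or.inl h)) hlup hnodup.1 hsorted.1,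
      stellar_partialSd hK hfresh (hLK T (Or.inr rfl))
        (fun T' hT' => hTS T' (List.mem_toFinset.1 hT')) hTup (fun h => hL (Or.inl (List.mem_toFinset.1 h))),
      List.toFinset_append, List.toFinset_cons, List.toFinset_nil, union_insert, union_empty]

end PartialSd

noncomputable def relabel (ν : Finset ℕ → ℕ) : ℕ → Finset ℕ :=
  Function.extend ν id fun x => {x}

section Relabel

variable {K S : Finset (Finset ℕ)} {ν : Finset ℕ → ℕ} {σ : Finset ℕ} {c : Finset (Finset ℕ)}

lemma relabel_apply_self (hν : Function.Injective ν) (T : Finset ℕ) : relabel ν (ν T) = T :=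
  hν.extend_apply _ _ T

lemma relabel_apply_of_mem (hfresh : ∀ T : Finset ℕ, ∀ s ∈ K, ν T ∉ s) {t : Finset ℕ}
    (ht : t ∈ K) {x : ℕ} (hx : x ∈ t) : relabel ν x = {x} :=
  Function.extend_apply' _ _ _ fun ⟨T, hT⟩ => hfresh T t ht (hT ▸ hx)

lemma image_relabel_union (hν : Function.Injective ν)
    (hfresh : ∀ T : Finset ℕ, ∀ s ∈ K, ν T ∉ s) (hσ : σ ∈ K) (c : Finset (Finset ℕ)) :
    (σ ∪ c.image ν).image (relabel ν) = σ.image (fun x => {x}) ∪ c := by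
  rw [image_union, image_image, image_congr fun x hx => relabel_apply_of_mem hfresh hσ hx,
    Function.comp_def]
  simp only [relabel_apply_self hν, image_id']

lemma injOn_relabel (hν : Function.Injective ν) (hfresh : ∀ T : Finset ℕ, ∀ s ∈ K, ν T ∉ s)
    (hS : ∀ T ∈ S, 2 ≤ T.card) : Set.InjOn (relabel ν) ↑((partialSd K S ν).sup id) := by
  have hvert : ∀ x ∈ (partialSd K S ν).sup id, relabel ν x = {x} ∨ ∃ T ∈ S, ν T = x := by
    intro x hx
    obtain ⟨_, hs, hxs⟩ := mem_sup.1 hx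
    obtain ⟨σ, c, h, rfl⟩ := mem_partialSd.1 hs
    rcases mem_union.1 hxs with hx | hx
    · exact Or.inl (relabel_apply_of_mem hfresh h.mem hx)
    · obtain ⟨T, hT, rfl⟩ := mem_image.1 hx
      exact Or.inr ⟨T, h.subset hT, rfl⟩
  have hmixed : ∀ x T, relabel ν x = {x} → T ∈ S → relabel ν x ≠ relabel ν (ν T) := by
    intro x T hx hT h
    have h2 := hS T hT
    rw [← relabel_apply_self hν T, ← h, hx, card_singleton] at h2
    omega
  intro x hx y hy hxy
  rcases hvert x hx with hx' | ⟨T, hT, rfl⟩ <;> rcases hvert y hy with hy' | ⟨T', hT', rfl⟩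
  · exact singleton_injective (hx' ▸ hy' ▸ hxy)
  · exact absurd hxy (hmixed x T' hx' hT')
  · exact absurd hxy.symm (hmixed y T hy' hT)
  · rw [relabel_apply_self hν, relabel_apply_self hν] at hxy
    rw [hxy]

lemma IsPartialSdFace.card_le_one (hS : ∀ T ∈ K, 2 ≤ T.card → T ∈ S)
    (h : IsPartialSdFace K S σ c) : σ.card ≤ 1 := by
  by_contra! h2
  exact h.not_subset σ (hS σ h.mem h2) subset_rfl

lemma IsPartialSdFace.image_singleton_union_mem_sd (hK : IsComplex K)
    (hS : ∀ T, T ∈ S ↔ T ∈ K ∧ 2 ≤ T.card) (h : IsPartialSdFace K S σ c) :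
    σ.image (fun x => {x}) ∪ c ∈ sd K := by
  have hσ1 := h.card_le_one fun T hT h2 => (hS T).2 ⟨hT, h2⟩
  simp only [sd, mem_filter, mem_powerset, union_subset_iff, mem_union, mem_image]
  refine ⟨⟨?_, fun T hT => mem_erase.2 ⟨?_, ((hS T).1 (h.subset hT)).1⟩⟩, ?_⟩
  · intro a ha
    obtain ⟨x, hx, rfl⟩ := mem_image.1 ha
    exact mem_erase.2 ⟨singleton_ne_empty x, hK.2 σ h.mem {x} (singleton_subset_iff.2 hx)⟩
  · exact ((empty_subset σ).trans_ssubset (h.ssubset T hT)).ne'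
  · rintro a (⟨x, hx, rfl⟩ | ha) b (⟨y, hy, rfl⟩ | hb)
    · exact Or.inl (singleton_subset_iff.2 (mem_singleton.2 (Finset.card_le_one.1 hσ1 x hx y hy)))
    · exact Or.inl (singleton_subset_iff.2 ((h.ssubset b hb).subset hx))
    · exact Or.inr (singleton_subset_iff.2 ((h.ssubset a ha).subset hy))
    · exact h.chain a ha b hb

lemma exists_image_singleton_eq (hK : IsComplex K) {e : Finset (Finset ℕ)} (heK : e ⊆ K)
    (he : ∀ a ∈ e, a.card = 1) (hch : ∀ a ∈ e, ∀ b ∈ e, a ⊆ b ∨ b ⊆ a) :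
    ∃ σ ∈ K, σ.card ≤ 1 ∧ σ.image (fun x => {x}) = e := by
  have he1 : e.card ≤ 1 := card_le_one.2 fun a ha b hb =>
    (hch a ha b hb).elim (fun hab => eq_of_subset_of_card_le hab (by rw [he a ha, he b hb]))
      (fun hba => (eq_of_subset_of_card_le hba (by rw [he a ha, he b hb])).symm)
  obtain ⟨a, hea⟩ := card_le_one_iff_subset_singleton.1 he1
  rcases subset_singleton_iff.1 hea with rfl | rfl
  · exact ⟨∅, hK.1, by simp, by simp⟩
  · obtain ⟨x, rfl⟩ := card_eq_one.1 (he _ (mem_singleton_self _))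
    exact ⟨{x}, heK (mem_singleton_self _), by simp, by simp⟩

lemma exists_isPartialSdFace_of_mem_sd (hK : IsComplex K)
    (hS : ∀ T, T ∈ S ↔ T ∈ K ∧ 2 ≤ T.card) {d : Finset (Finset ℕ)} (hd : d ∈ sd K) :
    ∃ σ c, IsPartialSdFace K S σ c ∧ σ.image (fun x => {x}) ∪ c = d := by
  simp only [sd, mem_filter, mem_powerset] at hd
  obtain ⟨hdK, hch⟩ := hd
  have hcard : ∀ a ∈ d.filter (fun a => ¬ 2 ≤ a.card), a.card = 1 := by
    intro a ha
    rw [mem_filter] at ha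
    have := card_pos.2 (nonempty_iff_ne_empty.2 (ne_of_mem_erase (hdK ha.1)))
    omega
  obtain ⟨σ, hσ, hσ1, hσd⟩ := exists_image_singleton_eq hK
    (fun a ha => mem_of_mem_erase (hdK (mem_of_mem_filter a ha))) hcard
    (fun a ha b hb => hch a (mem_of_mem_filter a ha) b (mem_of_mem_filter b hb))
  refine ⟨σ, d.filter (fun a => 2 ≤ a.card), ⟨hσ, fun T hT => ?_, fun a ha b hb => ?_,
    fun T hT hTσ => ?_, fun T hT => ?_⟩, ?_⟩
  · rw [mem_filter] at hT
    exact (hS T).2 ⟨mem_of_mem_erase (hdK hT.1), hT.2⟩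
  · exact hch a (mem_of_mem_filter a ha) b (mem_of_mem_filter b hb)
  · have := card_le_card hTσ
    have := ((hS T).1 hT).2
    omega
  · rw [mem_filter] at hT
    have hσT : σ ⊆ T := by
      intro x hx
      have hxd : {x} ∈ d := mem_of_mem_filter _ (hσd ▸ mem_image_of_mem _ hx)
      rcases hch {x} hxd T hT.1 with hxT | hTx
      · exact singleton_subset_iff.1 hxT
      · have := card_le_card hTx
        rw [card_singleton] at this
        omega
    exact hσT.ssubset_of_ne (by rintro rfl; omega)
  · rw [hσd, union_comm, filter_union_filter_not_eq]

theorem image_partialSd_eq_sd (hK : IsComplex K) (hν : Function.Injective ν)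
    (hfresh : ∀ T : Finset ℕ, ∀ s ∈ K, ν T ∉ s) (hS : ∀ T, T ∈ S ↔ T ∈ K ∧ 2 ≤ T.card) :
    (partialSd K S ν).image (fun s => s.image (relabel ν)) = sd K := by
  ext d
  simp only [mem_image, mem_partialSd]
  constructor
  · rintro ⟨_, ⟨σ, c, h, rfl⟩, rfl⟩
    rw [image_relabel_union hν hfresh h.mem]
    exact h.image_singleton_union_mem_sd hK hS
  · intro hd
    obtain ⟨σ, c, h, rfl⟩ := exists_isPartialSdFace_of_mem_sd hK hS hd
    exact ⟨_, ⟨σ, c, h, rfl⟩, image_relabel_union hν hfresh h.mem c⟩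

end Relabel

/-- performing stellar subdivisions at all faces of `K` of
dimension ≥ 1, in any order of weakly decreasing cardinality and with fresh
new vertices `ν T`, yields a complex isomorphic to the barycentric
subdivision `sd(K)` (via a relabelling `φ` of the vertices, injective on the
vertex set of the result). -/
theorem stellar_sequence_gives_barycentric
    (K : Finset (Finset ℕ)) (hK : IsComplex K)
    (Lst : List (Finset ℕ))
    (hmem : ∀ T, T ∈ Lst ↔ T ∈ K ∧ 2 ≤ T.card)
    (hnodup : Lst.Nodup)
    (hsorted : Lst.Pairwise fun a b => b.card ≤ a.card)
    (ν : Finset ℕ → ℕ) (hν : Function.Injective ν)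
    (hνfresh : ∀ T : Finset ℕ, ∀ s ∈ K, ν T ∉ s) :
    ∃ φ : ℕ → Finset ℕ,
      Set.InjOn φ ↑((Lst.foldl (fun C T => stellar T C (ν T)) K).sup id) ∧
      (Lst.foldl (fun C T => stellar T C (ν T)) K).image (fun s => s.image φ) =
        sd K := by
  have hS : ∀ T, T ∈ Lst.toFinset ↔ T ∈ K ∧ 2 ≤ T.card := fun T => List.mem_toFinset.trans (hmem T)
  have hup : ∀ T ∈ Lst, ∀ T' ∈ K, T ⊂ T' → T' ∈ Lst := fun T hT T' hT' hTT' =>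
    (hmem T').2 ⟨hT', ((hmem T).1 hT).2.trans (card_le_card hTT'.subset)⟩
  rw [foldl_stellar_eq_partialSd hK hνfresh (fun T hT => ((hmem T).1 hT).1)
    (fun h => by simpa using ((hmem ∅).1 h).2) hup hnodup hsorted]
  exact ⟨relabel ν, injOn_relabel hν hνfresh fun T hT => ((hS T).1 hT).2,
    image_partialSd_eq_sd hK hν hνfresh hS⟩
end
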